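/- arXiv:1901.06109 — 3 statements merged into one kernel-verified Lean document; each statement's English description precedes it below -/
import Mathlib

section
/- Domination preserves feasibility: if a feasible path to a goal exists from belief state (q, v_1) and v_1 ⊆ v_2, then a feasible path to a goal exists from (q, v_2). Consequently, pruning states dominated by already-expanded states preserves completeness of the belief-space search. -/
/-- There is a feasible path to a goal from belief state `(q, v)`: either `q`
already satisfies the goal, or the robot can traverse an edge `(q,q') ∈ E`
whose swept volume lies in the viewed region `v`, reaching `(q', v ∪ V q')`
from which a feasible path to a goal exists. -/
inductive VampSolvable {C W : Type*} (E : C → C → Prop) (S : C → C → Set W)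
    (V : C → Set W) (Qgoal : C → Prop) : C → Set W → Prop
  | done {q v} : Qgoal q → VampSolvable E S V Qgoal q v
  | step {q v} (q' : C) : E q q' → S q q' ⊆ v →
      VampSolvable E S V Qgoal q' (v ∪ V q') → VampSolvable E S V Qgoal q v

/-- Domination preserves feasibility: if a feasible path to a goal exists from
`(q, v₁)` and `v₁ ⊆ v₂`, then a feasible path to a goal exists from `(q, v₂)`.
Hence pruning dominated states preserves completeness of belief-space search. -/
theorem vamp_domination_preserves_feasibility {C W : Type*}
    (E : C → C → Prop) (S : C → C → Set W) (V : C → Set W) (Qgoal : C → Prop)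
    (q : C) (v1 v2 : Set W) (hsub : v1 ⊆ v2)
    (hsolv : VampSolvable E S V Qgoal q v1) :
    VampSolvable E S V Qgoal q v2 := by
  induction hsolv generalizing v2 with
  | done h => exact .done h
  | step q' he hs _ ih =>
      exact .step q' he (hs.trans hsub) (ih _ (Set.union_subset_union_left _ hsub))
end

section
/- Correctness of Vamp_Tree path reconstruction: suppose configurations c_0 = q_0, c_1, ..., c_m are visited in order, and for each i ≥ 1 there is an edge (p_i, c_i) in the graph with p_i ∈ {c_0,...,c_{i-1}} and S(p_i, c_i) ⊆ v_0 ∪ ⋃_{j<i} V(c_j). Then for a robot with symmetric swept volume (S(a,b)=S(b,a)), there exists a feasible VAMP path starting at q_0 that visits c_0, c_1, ..., c_m in order, where feasibility means each traversed edge's swept volume is contained in v_0 together with the visibility of all configurations previously reached along the path. -/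
private lemma biUnion_mono_aux {W : Type*} {ι : Type*} {s u : Finset ι}
    {A B : ι → Set W} (h : ∀ j ∈ s, ∃ k ∈ u, A j = B k) :
    (⋃ j ∈ s, A j) ⊆ ⋃ k ∈ u, B k := by
  refine Set.iUnion₂_subset fun j hj => ?_
  obtain ⟨k, hk, hAB⟩ := h j hj
  rw [hAB]
  exact Set.subset_biUnion_of_mem hk

/-- Correctness of Vamp_Tree path reconstruction: configurations
`c 0 = q₀, c 1, ..., c m` are visited in order, each `c i` (for `i ≥ 1`)
reachable by a graph edge from some previously visited `c jᵢ` whose swept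
volume is contained in `v₀` together with the visibility of `c 0, ..., c (i-1)`.
Then (for a symmetric swept-volume function) there is a feasible VAMP path
starting at `q₀`, traversing graph edges in either direction with each edge's
swept volume contained in `v₀` plus the visibility of all configurations
previously reached, that visits `c 0, c 1, ..., c m` in order. -/
theorem vamp_tree_path_reconstruction {C W : Type*}
    (E : C → C → Prop) (V : C → Set W) (S : C → C → Set W)
    (hS : ∀ a b, S a b = S b a) (v0 : Set W) (q0 : C)
    (m : ℕ) (c : ℕ → C) (hc0 : c 0 = q0)
    (hstep : ∀ i, 1 ≤ i → i ≤ m → ∃ j < i, E (c j) (c i) ∧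
      S (c j) (c i) ⊆ v0 ∪ ⋃ l ∈ Finset.range i, V (c l)) :
    ∃ (N : ℕ) (r : ℕ → C),
      r 0 = q0 ∧
      (∀ i < N, (E (r i) (r (i + 1)) ∨ E (r (i + 1)) (r i)) ∧
        S (r i) (r (i + 1)) ⊆ v0 ∪ ⋃ j ∈ Finset.Iic i, V (r j)) ∧
      ∃ t : ℕ → ℕ, Monotone t ∧ ∀ j ≤ m, t j ≤ N ∧ r (t j) = c j := by
  suffices h : ∀ i ≤ m, ∃ (N : ℕ) (r : ℕ → C),
      r 0 = q0 ∧
      (∀ i' < N, (E (r i') (r (i' + 1)) ∨ E (r (i' + 1)) (r i')) ∧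
        S (r i') (r (i' + 1)) ⊆ v0 ∪ ⋃ j ∈ Finset.Iic i', V (r j)) ∧
      ∃ t : ℕ → ℕ, Monotone t ∧ ∀ j ≤ i, t j ≤ N ∧ r (t j) = c j by
    exact h m le_rfl
  intro i hi
  induction i with
  | zero =>
    refine ⟨0, fun _ => q0, rfl, fun i' hi' => absurd hi' (Nat.not_lt_zero _),
      fun _ => 0, monotone_const, fun j hj => ⟨le_rfl, ?_⟩⟩
    interval_cases j
    exact hc0.symm ▸ rfl
  | succ i ih =>
    obtain ⟨N, r, hr0, hfeas, t, htmono, htvis⟩ := ih ((Nat.le_succ i).trans hi)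
    obtain ⟨j, hj, hE, hSub⟩ := hstep (i + 1) (Nat.succ_le_succ (Nat.zero_le i)) hi
    have hjle : j ≤ i := Nat.lt_succ_iff.mp hj
    obtain ⟨htjN, hrtj⟩ := htvis j hjle
    have htj2N : 2 * N - t j ≥ N := by omega
    set M := 2 * N - t j with hM
    set N' := M + 1 with hN'
    set r' : ℕ → C := fun s => if s ≤ N then r s
      else if s ≤ M then r (2 * N - s) else c (i + 1) with hr'
    have hr'eq : ∀ s ≤ N, r' s = r s := by
      intro s hs; simp [hr', hs]
    have hr'back : ∀ s, N ≤ s → s ≤ M → r' s = r (2 * N - s) := by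
      intro s h1 h2
      rcases eq_or_lt_of_le h1 with h | h
      · subst h; simp [hr']; congr 1; omega
      · simp [hr', Nat.not_le.mpr h, h2]
    have hr'N' : r' N' = c (i + 1) := by
      simp [hr', hN']
      intro h; omega
    refine ⟨N', r', by rw [hr'eq 0 (Nat.zero_le N)]; exact hr0, ?_, ?_⟩
    · intro i' hi'
      by_cases h1 : i' < N
      · have e1 : r' i' = r i' := hr'eq i' h1.le
        have e2 : r' (i' + 1) = r (i' + 1) := hr'eq (i' + 1) h1
        obtain ⟨hedge, hsub⟩ := hfeas i' h1
        rw [e1, e2]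
        refine ⟨hedge, hsub.trans (Set.union_subset_union_right v0 ?_)⟩
        refine biUnion_mono_aux fun l hl => ⟨l, hl, ?_⟩
        rw [hr'eq l ((Finset.mem_Iic.mp hl).trans h1.le)]
      · push_neg at h1
        by_cases h2 : i' + 1 ≤ M
        · -- backward step
          have e1 : r' i' = r (2 * N - i') := hr'back i' h1 (by omega)
          have e2 : r' (i' + 1) = r (2 * N - (i' + 1)) := hr'back (i' + 1) (by omega) h2
          set k := 2 * N - (i' + 1) with hk
          have hkN : k < N := by omega
          have hk1 : 2 * N - i' = k + 1 := by omega
          obtain ⟨hedge, hsub⟩ := hfeas k hkN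
          rw [e1, e2, hk1]
          constructor
          · tauto
          · rw [hS]
            refine hsub.trans (Set.union_subset_union_right v0 ?_)
            refine biUnion_mono_aux fun l hl => ⟨l, ?_, ?_⟩
            · have := Finset.mem_Iic.mp hl; exact Finset.mem_Iic.mpr (by omega)
            · rw [hr'eq l ((Finset.mem_Iic.mp hl).trans hkN.le)]
        · -- last step: from c j to c (i+1)
          push_neg at h2
          have hi'M : i' = M := by omega
          have e1 : r' i' = r (t j) := by
            rw [hr'back i' h1 (by omega)]; congr 1; omega
          have e2 : r' (i' + 1) = c (i + 1) := by rw [hi'M]; exact hr'N'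
          rw [e1, e2, hrtj]
          refine ⟨Or.inl hE, hSub.trans (Set.union_subset_union_right v0 ?_)⟩
          refine biUnion_mono_aux fun l hl => ?_
          have hl' : l ≤ i := Nat.lt_succ_iff.mp (Finset.mem_range.mp hl)
          obtain ⟨htl, hrl⟩ := htvis l hl'
          refine ⟨t l, Finset.mem_Iic.mpr (by omega), ?_⟩
          rw [hr'eq (t l) htl, hrl]
    · refine ⟨fun l => if l ≤ i then t l else N', ?_, ?_⟩
      · intro a b hab
        by_cases ha : a ≤ i <;> by_cases hb : b ≤ i <;> simp [ha, hb]
        · exact htmono hab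
        · exact (htvis a ha).1.trans (by omega)
        · omega
      · intro l hl
        by_cases hli : l ≤ i
        · obtain ⟨h1, h2⟩ := htvis l hli
          simp only [if_pos hli]
          exact ⟨h1.trans (by omega), (hr'eq (t l) h1).trans h2⟩
        · have : l = i + 1 := by omega
          subst this
          simp only [if_neg hli]
          exact ⟨le_rfl, hr'N'⟩
end

section
/- Completeness of Vamp_Tree expansion: if a feasible path [q_0,...,q_n] exists, then the tree-growing process—which repeatedly adds any graph edge (q, q') with q already visited, q' not yet visited, and S(q,q') contained in v_0 union the visibility of all visited configurations—can never become permanently stuck before visiting q_n; i.e., at any stage where all of q_0,...,q_i (i < n) are visited but q_{i+1} is not, the edge (q_i, q_{i+1}) is addable. -/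
/-- Completeness of Vamp_Tree expansion: if `q 0, ..., q n` is a feasible path,
then at any stage of the tree-growing process where all of `q 0, ..., q i`
(with `i < n`) belong to the visited set `A` but `q (i+1)` does not, the edge
`(q i, q (i+1))` is addable: it is a graph edge from a visited to an unvisited
configuration whose swept volume is contained in `v₀` union the visibility of
all visited configurations. -/
theorem vamp_tree_completeness_step {Q W : Type*}
    (E : Q → Q → Prop) (V : Q → Set W) (S : Q → Q → Set W) (v0 : Set W)
    (n : ℕ) (q : ℕ → Q)
    (hfeas : ∀ i < n, E (q i) (q (i + 1)) ∧
      S (q i) (q (i + 1)) ⊆ v0 ∪ ⋃ j ∈ Finset.Iic i, V (q j)) :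
    ∀ i < n, ∀ A : Set Q, (∀ j ≤ i, q j ∈ A) → q (i + 1) ∉ A →
      E (q i) (q (i + 1)) ∧ q i ∈ A ∧ q (i + 1) ∉ A ∧
      S (q i) (q (i + 1)) ⊆ v0 ∪ ⋃ r ∈ A, V r := by
  intro i hi A hA hA'
  obtain ⟨hE, hS⟩ := hfeas i hi
  refine ⟨hE, hA i le_rfl, hA', hS.trans ?_⟩
  apply Set.union_subset_union_right
  intro x hx
  simp only [Set.mem_iUnion] at hx ⊢
  obtain ⟨j, hj, hxj⟩ := hx
  exact ⟨q j, hA j (Finset.mem_Iic.mp hj), hxj⟩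
end
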